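/- arXiv:1306.0922 — 2 statements merged into one kernel-verified Lean document; each statement's English description precedes it below -/
import Mathlib

section
/- (Reduction Method.) Let A, B ∈ M_{p×p}(ℝ) be simultaneously triangularizable: there is an invertible matrix T such that Ā = T⁻¹AT and B̄ = T⁻¹BT are both upper triangular, with diagonal entries α₁,…,α_p of Ā and β₁,…,β_p of B̄ (the eigenvalues of A and B). Assume that for each i ∈ {1,…,p} and every u ∈ [0,1]: if α_i ≠ 0 then (β_i/α_i)(1 − e^{−u α_i}) ≠ −1, and if α_i = 0 then β_i u ≠ −1. Let f : ℝ → ℂ^p be Z-almost automorphic and let x be a bounded solution of the DEPCA x'(t) = A x(t) + B x(⌊t⌋) + f(t), i.e. a bounded continuous function satisfying x(t) = x(s) + ∫_s^t (A x(u) + B x(⌊u⌋) + f(u)) du for all s ≤ t. Then x is almost automorphic (in Bochner's sense) if and only if the sequence n ↦ x(n), n ∈ ℤ, is discrete almost automorphic. -/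
open MeasureTheory Filter Topology

/-- Bounded, piecewise continuous: continuous on ℝ ∖ ℤ with finite one-sided
limits at every integer. -/
def BddPC (p : ℕ) (f : ℝ → Fin p → ℂ) : Prop :=
  (∃ C : ℝ, ∀ t : ℝ, ‖f t‖ ≤ C) ∧
  ContinuousOn f {t : ℝ | ∀ n : ℤ, t ≠ (n : ℝ)} ∧
  ∀ n : ℤ, (∃ L : Fin p → ℂ, Tendsto f (𝓝[<] (n : ℝ)) (𝓝 L)) ∧
           (∃ R : Fin p → ℂ, Tendsto f (𝓝[>] (n : ℝ)) (𝓝 R))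

/-- `ℤ`-almost automorphic functions. -/
def ZAlmostAutomorphic (p : ℕ) (f : ℝ → Fin p → ℂ) : Prop :=
  BddPC p f ∧
  ∀ s : ℕ → ℤ, ∃ (φ : ℕ → ℕ) (g : ℝ → Fin p → ℂ), StrictMono φ ∧
    (∀ t : ℝ, Tendsto (fun n => f (t + (s (φ n) : ℝ))) atTop (𝓝 (g t))) ∧
    (∀ t : ℝ, Tendsto (fun n => g (t - (s (φ n) : ℝ))) atTop (𝓝 (f t)))

/-- Almost automorphic functions in the sense of Bochner. -/
def AlmostAutomorphic (p : ℕ) (f : ℝ → Fin p → ℂ) : Prop :=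
  (∃ C : ℝ, ∀ t : ℝ, ‖f t‖ ≤ C) ∧ Continuous f ∧
  ∀ s : ℕ → ℝ, ∃ (φ : ℕ → ℕ) (g : ℝ → Fin p → ℂ), StrictMono φ ∧
    (∀ t : ℝ, Tendsto (fun n => f (t + s (φ n))) atTop (𝓝 (g t))) ∧
    (∀ t : ℝ, Tendsto (fun n => g (t - s (φ n))) atTop (𝓝 (f t)))

/-- Multiplication of a complex vector by a real matrix. -/
noncomputable def RMulVec {p : ℕ} (A : Matrix (Fin p) (Fin p) ℝ) (x : Fin p → ℂ) :
    Fin p → ℂ :=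
  fun i => ∑ j, ((A i j : ℝ) : ℂ) * x j

/-- A (continuous) solution of the DEPCA `x'(t) = A x(t) + B x(⌊t⌋) + f(t)`, in the
integrated sense. -/
def IsDEPCASolution {p : ℕ} (A B : Matrix (Fin p) (Fin p) ℝ) (f : ℝ → Fin p → ℂ)
    (x : ℝ → Fin p → ℂ) : Prop :=
  Continuous x ∧
  ∀ s t : ℝ, s ≤ t →
    x t = x s + ∫ u in s..t, (RMulVec A (x u) + RMulVec B (x ((⌊u⌋ : ℤ) : ℝ)) + f u)

/-- Discrete almost automorphic sequences `ℤ → ℂ^p`. -/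
def DiscreteAA (p : ℕ) (f : ℤ → Fin p → ℂ) : Prop :=
  ∀ s : ℕ → ℤ, ∃ (φ : ℕ → ℕ) (g : ℤ → Fin p → ℂ), StrictMono φ ∧
    (∀ k : ℤ, Tendsto (fun n => f (k + s (φ n))) atTop (𝓝 (g k))) ∧
    (∀ k : ℤ, Tendsto (fun n => g (k - s (φ n))) atTop (𝓝 (f k)))

open Set
open scoped NNReal

/-!
On a step `[k, k + 1]` the DEPCA is the linear ODE `x' = A x + B x(k) + f`, and Gronwall's
inequality bounds the difference of two such solutions by `‖x₁(k) - x₂(k)‖` plus the `L¹`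
distance of the forcings. Given real shifts `sₙ`, pass to a subsequence along which
`f(· + ⌊sₙ⌋)`, `x(· + ⌊sₙ⌋)` on `ℤ` and the fractional parts of `sₙ` converge. The stability
estimate and dominated convergence make `x(t + ⌊sₙ⌋)` Cauchy for every `t`; its limit `y`
solves the equation with the limit forcing, and the same estimate run backwards gives
`y(t - ⌊sₙ⌋) → x(t)`. The fractional parts are absorbed by a common Lipschitz bound of `x`
and `y`.
-/

lemma gronwallBound_le_mul_exp {δ K ε x : ℝ} (hδ : 0 ≤ δ) (hK : 0 ≤ K) (hε : 0 ≤ ε)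
    (hx : x ≤ 1) : gronwallBound δ K ε x ≤ (δ + ε) * Real.exp K := by
  refine (gronwallBound_mono hδ hε hK hx).trans ?_
  rcases hK.eq_or_lt with rfl | hKpos
  · simp [gronwallBound_K0]
  · rw [gronwallBound_of_K_ne_0 hKpos.ne']
    simp only [mul_one, add_mul]
    have he : Real.exp (-K) * Real.exp K = 1 := by rw [← Real.exp_add]; simp
    -- `(e^K - 1) / K ≤ e^K` is `1 - e^{-K} ≤ K`
    have hexp : Real.exp K - 1 ≤ K * Real.exp K := by
      nlinarith [Real.add_one_le_exp (-K), Real.exp_pos K]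
    have : ε / K * (Real.exp K - 1) ≤ ε * Real.exp K := by
      rw [div_mul_eq_mul_div, div_le_iff₀ hKpos]
      nlinarith [mul_le_mul_of_nonneg_left hexp hε]
    linarith

/-- The two-sided limit relation in Bochner's definition of almost automorphy, along `s`. -/
def IsShiftLimit {G X : Type*} [Add G] [Sub G] [TopologicalSpace X] (f g : G → X)
    (s : ℕ → G) : Prop :=
  (∀ t, Tendsto (fun n => f (t + s n)) atTop (𝓝 (g t))) ∧
    ∀ t, Tendsto (fun n => g (t - s n)) atTop (𝓝 (f t))

namespace IsShiftLimit

variable {G X : Type*} [Add G] [Sub G]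

lemma comp_strictMono [TopologicalSpace X] {f g : G → X} {s : ℕ → G} (h : IsShiftLimit f g s)
    {φ : ℕ → ℕ} (hφ : StrictMono φ) : IsShiftLimit f g (s ∘ φ) :=
  ⟨fun t => (h.1 t).comp hφ.tendsto_atTop, fun t => (h.2 t).comp hφ.tendsto_atTop⟩

lemma norm_le [SeminormedAddCommGroup X] {f g : G → X} {s : ℕ → G} {C : ℝ}
    (h : IsShiftLimit f g s) (hfC : ∀ t, ‖f t‖ ≤ C) (t : G) : ‖g t‖ ≤ C :=
  le_of_tendsto (h.1 t).norm (Eventually.of_forall fun _ => hfC _)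

lemma add_of_lipschitzWith [PseudoMetricSpace X] {x y : ℝ → X} {K : ℝ≥0}
    (hx : LipschitzWith K x) (hy : LipschitzWith K y) {c ρ : ℕ → ℝ} {r : ℝ}
    (h : IsShiftLimit x y c) (hρ : Tendsto ρ atTop (𝓝 r)) :
    IsShiftLimit x (fun t => y (t + r)) (fun n => c n + ρ n) := by
  have hdist : Tendsto (fun n => (K : ℝ) * dist r (ρ n)) atTop (𝓝 0) := by
    simpa using ((tendsto_const_nhds (x := r)).dist hρ).const_mul (K : ℝ)
  refine ⟨fun t => (h.1 (t + r)).congr_dist ?_, fun t => (h.2 t).congr_dist ?_⟩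
  · refine squeeze_zero (fun _ => dist_nonneg) (fun n => ?_) hdist
    refine (hx.dist_le_mul _ _).trans_eq ?_
    dsimp only
    rw [Real.dist_eq, Real.dist_eq]; congr 2; ring
  · refine squeeze_zero (fun _ => dist_nonneg) (fun n => ?_) hdist
    refine (hy.dist_le_mul _ _).trans_eq ?_
    dsimp only
    rw [Real.dist_eq, Real.dist_eq, abs_sub_comm]; congr 2; ring

end IsShiftLimit

section StepSolution

variable {E : Type*} [NormedAddCommGroup E]

lemma tendsto_intervalIntegral_norm_zero {ι : Type*} {l : Filter ι} [l.IsCountablyGenerated]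
    {F : ι → ℝ → E} {C a b : ℝ} (hFm : ∀ i, AEStronglyMeasurable (F i) volume)
    (hFC : ∀ i u, ‖F i u‖ ≤ C) (hF : ∀ u, Tendsto (fun i => F i u) l (𝓝 0)) :
    Tendsto (fun i => ∫ u in a..b, ‖F i u‖) l (𝓝 0) := by
  simpa using intervalIntegral.tendsto_integral_filter_of_dominated_convergence (fun _ => C)
    (Eventually.of_forall fun i => (hFm i).norm.restrict)
    (Eventually.of_forall fun i => Eventually.of_forall fun u _ => (norm_norm (F i u)).le.trans
      (hFC i u))
    intervalIntegrable_const (Eventually.of_forall fun u _ => (hF u).norm)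

variable [NormedSpace ℝ E]

lemma lipschitzWith_of_eq_add_integral {x F : ℝ → E} {L : ℝ}
    (hx : ∀ s t, s ≤ t → x t = x s + ∫ u in s..t, F u) (hF : ∀ u, ‖F u‖ ≤ L) :
    LipschitzWith L.toNNReal x := by
  have hsub : ∀ a b, x a - x b = ∫ u in b..a, F u := fun a b => by
    rcases le_total b a with hba | hab
    · rw [hx b a hba, add_sub_cancel_left]
    · rw [hx a b hab, intervalIntegral.integral_symm, sub_add_cancel_left, neg_neg]
  refine LipschitzWith.of_dist_le' fun a b => ?_
  rw [dist_eq_norm, hsub, Real.dist_eq]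
  exact intervalIntegral.norm_integral_le_of_norm_le_const fun u _ => hF u

noncomputable def stepConst (A B : E →L[ℝ] E) : ℝ := (1 + ‖A‖ + ‖B‖) * Real.exp ‖A‖ + 1

def IsStepSolution (A B : E →L[ℝ] E) (f x : ℝ → E) (k : ℝ) : Prop :=
  ∀ t ∈ Icc k (k + 1), x t = x k + ∫ u in k..t, (A (x u) + B (x k) + f u)

namespace IsStepSolution

variable {A B : E →L[ℝ] E}

lemma comp_add_right {f x : ℝ → E} {k c : ℝ} (h : IsStepSolution A B f x (k + c)) :
    IsStepSolution A B (fun u => f (u + c)) (fun u => x (u + c)) k := by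
  intro t ht
  dsimp only
  rw [h (t + c) ⟨by linarith [ht.1], by linarith [ht.2]⟩,
    intervalIntegral.integral_comp_add_right (fun u => A (x u) + B (x (k + c)) + f u)]

lemma comp_add_intCast {f x : ℝ → E} (h : ∀ k : ℤ, IsStepSolution A B f x k) (c k : ℤ) :
    IsStepSolution A B (fun u => f (u + c)) (fun u => x (u + c)) k :=
  comp_add_right (by simpa using h (k + c))

lemma of_tendsto {ι : Type*} {l : Filter ι} [l.NeBot] [l.IsCountablyGenerated]
    {f x : ι → ℝ → E} {g y : ℝ → E} {k Cx Cf : ℝ}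
    (h : ∀ i, IsStepSolution A B (f i) (x i) k) (hx : ∀ i, Continuous (x i))
    (hfm : ∀ i, AEStronglyMeasurable (f i) volume)
    (hxC : ∀ i u, ‖x i u‖ ≤ Cx) (hfC : ∀ i u, ‖f i u‖ ≤ Cf)
    (hxy : ∀ u, Tendsto (fun i => x i u) l (𝓝 (y u)))
    (hfg : ∀ u, Tendsto (fun i => f i u) l (𝓝 (g u))) :
    IsStepSolution A B g y k := by
  intro t ht
  have hint : Tendsto (fun i => ∫ u in k..t, (A (x i u) + B (x i k) + f i u)) l
      (𝓝 (∫ u in k..t, (A (y u) + B (y k) + g u))) := by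
    refine intervalIntegral.tendsto_integral_filter_of_dominated_convergence
      (fun _ => ‖A‖ * Cx + ‖B‖ * Cx + Cf) (Eventually.of_forall fun i => ?_)
      (Eventually.of_forall fun i => Eventually.of_forall fun u _ => ?_)
      intervalIntegrable_const (Eventually.of_forall fun u _ => ?_)
    · exact (((by fun_prop : Continuous fun u => A (x i u) + B (x i k))).aestronglyMeasurable.add
        (hfm i)).restrict
    · calc ‖A (x i u) + B (x i k) + f i u‖ ≤ ‖A‖ * ‖x i u‖ + ‖B‖ * ‖x i k‖ + ‖f i u‖ :=
            norm_add₃_le.trans (by gcongr <;> exact ContinuousLinearMap.le_opNorm _ _)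
        _ ≤ ‖A‖ * Cx + ‖B‖ * Cx + Cf := by gcongr <;> simp only [hxC, hfC]
    · exact (((A.continuous.tendsto _).comp (hxy u)).add
        ((B.continuous.tendsto _).comp (hxy k))).add (hfg u)
  exact tendsto_nhds_unique (hxy t)
    (((hxy k).add hint).congr fun i => (h i t ht).symm)

end IsStepSolution

variable [CompleteSpace E]

lemma norm_le_stepConst_of_eq_add_integral (A B : E →L[ℝ] E) {d G : ℝ → E} {k η : ℝ}
    (hd : Continuous d) (hG : ∀ t ∈ Icc k (k + 1), ‖G t‖ ≤ η)
    (hdG : ∀ t ∈ Icc k (k + 1), d t = d k + (∫ u in k..t, (A (d u) + B (d k))) + G t) :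
    ∀ t ∈ Icc k (k + 1), ‖d t‖ ≤ stepConst A B * (‖d k‖ + η) := by
  have hη : 0 ≤ η := (norm_nonneg _).trans (hG k (left_mem_Icc.2 (by linarith)))
  set h : ℝ → E := fun u => A (d u) + B (d k)
  have hh : Continuous h := by fun_prop
  -- `e = d - G` is differentiable, so Gronwall applies to it
  set e : ℝ → E := fun t => d k + ∫ u in k..t, h u
  have he : ∀ t, HasDerivAt e (h t) t := fun t =>
    (intervalIntegral.integral_hasDerivAt_right (hh.intervalIntegrable k t)
      (hh.stronglyMeasurableAtFilter volume _) hh.continuousAt).const_add (d k)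
  have hde : ∀ t ∈ Icc k (k + 1), ‖d t‖ ≤ ‖e t‖ + η := fun t ht => by
    rw [hdG t ht]; exact (norm_add_le _ _).trans (by gcongr; exact hG t ht)
  have hbound : ∀ s ∈ Ico k (k + 1), ‖h s‖ ≤ ‖A‖ * ‖e s‖ + (‖A‖ * η + ‖B‖ * ‖d k‖) := by
    intro s hs
    calc ‖h s‖ ≤ ‖A‖ * ‖d s‖ + ‖B‖ * ‖d k‖ :=
          (norm_add_le _ _).trans (add_le_add (A.le_opNorm _) (B.le_opNorm _))
      _ ≤ ‖A‖ * (‖e s‖ + η) + ‖B‖ * ‖d k‖ := by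
          gcongr; exact hde s (Ico_subset_Icc_self hs)
      _ = _ := by ring
  have hgron := norm_le_gronwallBound_of_norm_deriv_right_le (δ := ‖d k‖)
    (continuous_iff_continuousAt.2 fun t => (he t).continuousAt).continuousOn
    (fun s _ => (he s).hasDerivWithinAt) (by simp [e]) hbound
  intro t ht
  have hgb := gronwallBound_le_mul_exp (norm_nonneg (d k)) (norm_nonneg A)
    (by positivity : 0 ≤ ‖A‖ * η + ‖B‖ * ‖d k‖) (x := t - k) (by linarith [ht.2])
  calc ‖d t‖ ≤ (‖d k‖ + (‖A‖ * η + ‖B‖ * ‖d k‖)) * Real.exp ‖A‖ + η := by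
        linarith [hde t ht, hgron t ht]
    _ ≤ stepConst A B * (‖d k‖ + η) := by
        unfold stepConst
        nlinarith [mul_nonneg (mul_nonneg (norm_nonneg A) hη) (Real.exp_pos ‖A‖).le,
          mul_nonneg (mul_nonneg (norm_nonneg B) hη) (Real.exp_pos ‖A‖).le,
          mul_nonneg (mul_nonneg (norm_nonneg A) (norm_nonneg (d k))) (Real.exp_pos ‖A‖).le,
          mul_nonneg hη (Real.exp_pos ‖A‖).le, norm_nonneg (d k)]

namespace IsStepSolution

variable {A B : E →L[ℝ] E}

lemma norm_sub_le {f₁ f₂ x₁ x₂ : ℝ → E} {k : ℝ}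
    (h₁ : IsStepSolution A B f₁ x₁ k) (h₂ : IsStepSolution A B f₂ x₂ k)
    (hx₁ : Continuous x₁) (hx₂ : Continuous x₂)
    (hf₁ : IntervalIntegrable f₁ volume k (k + 1)) (hf₂ : IntervalIntegrable f₂ volume k (k + 1))
    {t : ℝ} (ht : t ∈ Icc k (k + 1)) :
    ‖x₁ t - x₂ t‖ ≤ stepConst A B * (‖x₁ k - x₂ k‖ + ∫ u in k..k + 1, ‖f₁ u - f₂ u‖) := by
  have hsub : ∀ s ∈ Icc k (k + 1), uIcc k s ⊆ uIcc k (k + 1) := fun s hs =>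
    uIcc_subset_uIcc left_mem_uIcc (Icc_subset_uIcc hs)
  refine norm_le_stepConst_of_eq_add_integral A B (d := fun s => x₁ s - x₂ s)
    (G := fun s => ∫ u in k..s, (f₁ u - f₂ u)) (hx₁.sub hx₂) (fun s hs => ?_) (fun s hs => ?_) t ht
  · calc ‖∫ u in k..s, (f₁ u - f₂ u)‖ ≤ ∫ u in k..s, ‖f₁ u - f₂ u‖ :=
          intervalIntegral.norm_integral_le_integral_norm hs.1
      _ ≤ ∫ u in k..k + 1, ‖f₁ u - f₂ u‖ :=
          intervalIntegral.integral_mono_interval le_rfl hs.1 hs.2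
            (Eventually.of_forall fun _ => norm_nonneg _) (hf₁.sub hf₂).norm
  · have hf₁s := hf₁.mono_set (hsub s hs)
    have hf₂s := hf₂.mono_set (hsub s hs)
    have hP : ∀ x : ℝ → E, Continuous x →
        IntervalIntegrable (fun u => A (x u) + B (x k)) volume k s := fun x hx =>
      (by fun_prop : Continuous fun u => A (x u) + B (x k)).intervalIntegrable _ _
    have hlin : (∫ u in k..s, (A (x₁ u - x₂ u) + B (x₁ k - x₂ k))) =
        (∫ u in k..s, (A (x₁ u) + B (x₁ k))) - ∫ u in k..s, (A (x₂ u) + B (x₂ k)) := by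
      rw [← intervalIntegral.integral_sub (hP x₁ hx₁) (hP x₂ hx₂)]
      simp only [map_sub]
      congr 1 with u
      abel
    rw [h₁ s hs, h₂ s hs, intervalIntegral.integral_add (hP x₁ hx₁) hf₁s,
      intervalIntegral.integral_add (hP x₂ hx₂) hf₂s, intervalIntegral.integral_sub hf₁s hf₂s,
      hlin]
    abel

lemma tendsto_sub_zero_of_forall {ι : Type*} {l : Filter ι} [l.IsCountablyGenerated]
    {f₁ f₂ x₁ x₂ : ι → ℝ → E} {C : ℝ}
    (h₁ : ∀ i (k : ℤ), IsStepSolution A B (f₁ i) (x₁ i) k)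
    (h₂ : ∀ i (k : ℤ), IsStepSolution A B (f₂ i) (x₂ i) k)
    (hx₁ : ∀ i, Continuous (x₁ i)) (hx₂ : ∀ i, Continuous (x₂ i))
    (hf₁m : ∀ i, AEStronglyMeasurable (f₁ i) volume)
    (hf₂m : ∀ i, AEStronglyMeasurable (f₂ i) volume)
    (hf₁C : ∀ i u, ‖f₁ i u‖ ≤ C) (hf₂C : ∀ i u, ‖f₂ i u‖ ≤ C)
    (hinit : ∀ k : ℤ, Tendsto (fun i => x₁ i k - x₂ i k) l (𝓝 0))
    (hforce : ∀ u, Tendsto (fun i => f₁ i u - f₂ i u) l (𝓝 0)) (t : ℝ) :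
    Tendsto (fun i => x₁ i t - x₂ i t) l (𝓝 0) := by
  have hint : ∀ {f : ℝ → E}, AEStronglyMeasurable f volume → (∀ u, ‖f u‖ ≤ C) →
      IntervalIntegrable f volume ⌊t⌋ (⌊t⌋ + 1) := fun hfm hfC =>
    intervalIntegrable_const.mono_fun' hfm.restrict (ae_of_all _ hfC)
  have ht : t ∈ Icc (⌊t⌋ : ℝ) (⌊t⌋ + 1) := ⟨Int.floor_le t, (Int.lt_floor_add_one t).le⟩
  refine squeeze_zero_norm (fun i => norm_sub_le (h₁ i ⌊t⌋) (h₂ i ⌊t⌋) (hx₁ i) (hx₂ i)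
    (hint (hf₁m i) (hf₁C i)) (hint (hf₂m i) (hf₂C i)) ht) ?_
  have hF := tendsto_intervalIntegral_norm_zero (C := C + C) (a := ⌊t⌋) (b := ⌊t⌋ + 1)
    (fun i => (hf₁m i).sub (hf₂m i))
    (fun i u => (_root_.norm_sub_le _ _).trans (add_le_add (hf₁C i u) (hf₂C i u))) hforce
  simpa using ((hinit ⌊t⌋).norm.add hF).const_mul (stepConst A B)

lemma cauchySeq_comp_add {f g x : ℝ → E} {Cf : ℝ}
    {M : ℕ → ℤ} {ξ : ℤ → E}
    (hstep : ∀ k : ℤ, IsStepSolution A B f x k) (hxc : Continuous x)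
    (hfm : AEStronglyMeasurable f volume) (hfC : ∀ t, ‖f t‖ ≤ Cf)
    (hfg : ∀ t, Tendsto (fun n => f (t + M n)) atTop (𝓝 (g t)))
    (hxξ : ∀ k : ℤ, Tendsto (fun n => x (k + M n)) atTop (𝓝 (ξ k))) (t : ℝ) :
    CauchySeq fun n => x (t + M n) := by
  rw [cauchySeq_iff_tendsto_dist_atTop_0, ← prod_atTop_atTop_eq]
  simp only [dist_eq_norm, ← tendsto_zero_iff_norm_tendsto_zero]
  refine tendsto_sub_zero_of_forall (l := atTop ×ˢ atTop)
    (fun i : ℕ × ℕ => comp_add_intCast hstep (M i.1)) (fun i => comp_add_intCast hstep (M i.2))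
    (fun _ => by fun_prop) (fun _ => by fun_prop)
    (fun _ => hfm.comp_measurePreserving (measurePreserving_add_right volume _))
    (fun _ => hfm.comp_measurePreserving (measurePreserving_add_right volume _))
    (fun _ _ => hfC _) (fun _ _ => hfC _) (fun k => ?_) (fun u => ?_) t
  · simpa using ((hxξ k).comp tendsto_fst).sub ((hxξ k).comp tendsto_snd)
  · simpa using ((hfg u).comp tendsto_fst).sub ((hfg u).comp tendsto_snd)

end IsStepSolution

theorem exists_isShiftLimit_of_isStepSolution {A B : E →L[ℝ] E} {f g x : ℝ → E} {K : ℝ≥0}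
    {Cx Cf : ℝ} {M : ℕ → ℤ} {ξ : ℤ → E}
    (hstep : ∀ k : ℤ, IsStepSolution A B f x k) (hxK : LipschitzWith K x)
    (hxC : ∀ t, ‖x t‖ ≤ Cx) (hfm : AEStronglyMeasurable f volume) (hfC : ∀ t, ‖f t‖ ≤ Cf)
    (hfg : IsShiftLimit f g (fun n => (M n : ℝ)))
    (hxξ : IsShiftLimit (fun k : ℤ => x k) ξ M) :
    ∃ y, LipschitzWith K y ∧ IsShiftLimit x y (fun n => (M n : ℝ)) := by
  have hxξ' : ∀ k : ℤ, Tendsto (fun n => x (k + M n)) atTop (𝓝 (ξ k)) := fun k => by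
    simpa using hxξ.1 k
  choose y hy using fun t => cauchySeq_tendsto_of_complete
    (IsStepSolution.cauchySeq_comp_add hstep hxK.continuous hfm hfC hfg.1 hxξ' t)
  have hyK : LipschitzWith K y :=
    (isClosed_setOfPred_lipschitzWith K).mem_of_tendsto (tendsto_pi_nhds.2 hy)
      (Eventually.of_forall fun n => by
        simpa [Function.comp_def] using hxK.comp (isometry_add_right (M n : ℝ)).lipschitz)
  have hyξ : ∀ k : ℤ, y k = ξ k := fun k => tendsto_nhds_unique (hy k) (hxξ' k)
  have hgm : AEStronglyMeasurable g volume :=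
    aestronglyMeasurable_of_tendsto_ae atTop
      (fun n => hfm.comp_measurePreserving (measurePreserving_add_right volume (M n : ℝ)))
      (ae_of_all _ hfg.1)
  have hystep : ∀ k : ℤ, IsStepSolution A B g y k := fun k =>
    IsStepSolution.of_tendsto (fun n => IsStepSolution.comp_add_intCast hstep (M n) k)
      (fun _ => hxK.continuous.comp (continuous_add_const _))
      (fun _ => hfm.comp_measurePreserving (measurePreserving_add_right _ _))
      (fun _ _ => hxC _) (fun _ _ => hfC _) hy hfg.1
  refine ⟨y, hyK, hy, fun t => ?_⟩
  have hback := IsStepSolution.tendsto_sub_zero_of_forall (l := atTop)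
    (fun n => IsStepSolution.comp_add_intCast hystep (-M n)) (fun _ => hstep)
    (fun _ => hyK.continuous.comp (continuous_add_const _)) (fun _ => hxK.continuous)
    (fun _ => hgm.comp_measurePreserving (measurePreserving_add_right volume _))
    (fun _ => hfm) (fun _ _ => hfg.norm_le hfC _) (fun _ _ => hfC _)
    (fun k => by simpa [← sub_eq_add_neg, ← hyξ, tendsto_sub_nhds_zero_iff] using hxξ.2 k)
    (fun u => by simpa [← sub_eq_add_neg, tendsto_sub_nhds_zero_iff] using hfg.2 u) t
  simpa [← sub_eq_add_neg, tendsto_sub_nhds_zero_iff] using hback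

end StepSolution

section DEPCA

variable {p : ℕ}

noncomputable def rmulVecCLM (A : Matrix (Fin p) (Fin p) ℝ) : (Fin p → ℂ) →L[ℝ] (Fin p → ℂ) :=
  LinearMap.toContinuousLinearMap ((A.map (↑)).mulVecLin.restrictScalars ℝ)

lemma rmulVecCLM_apply (A : Matrix (Fin p) (Fin p) ℝ) (v : Fin p → ℂ) :
    rmulVecCLM A v = RMulVec A v :=
  rfl

lemma BddPC.aestronglyMeasurable {f : ℝ → Fin p → ℂ} (hf : BddPC p f) :
    AEStronglyMeasurable f volume := by
  have hcount : {t : ℝ | ∀ n : ℤ, t ≠ n}ᶜ.Countable :=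
    (countable_range ((↑) : ℤ → ℝ)).mono fun t ht => by simpa [eq_comm] using ht
  have hae : ∀ᵐ t ∂volume, t ∈ {t : ℝ | ∀ n : ℤ, t ≠ n} := hcount.measure_zero _
  rw [← Measure.restrict_eq_self_of_ae_mem hae]
  exact hf.2.1.aestronglyMeasurable hcount.measurableSet.of_compl

namespace IsDEPCASolution

variable {A B : Matrix (Fin p) (Fin p) ℝ} {f x : ℝ → Fin p → ℂ}

lemma isStepSolution (hx : IsDEPCASolution A B f x) (k : ℤ) :
    IsStepSolution (rmulVecCLM A) (rmulVecCLM B) f x k := by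
  intro t ht
  rw [hx.2 k t ht.1]
  congr 1
  refine intervalIntegral.integral_congr_ae ?_
  -- `⌊u⌋ = k` on `(k, t]` except possibly at the null point `u = k + 1`
  filter_upwards [volume.ae_ne ((k : ℝ) + 1)] with u hu hmem
  rw [uIoc_of_le ht.1] at hmem
  rw [Int.floor_eq_iff.2 ⟨hmem.1.le, lt_of_le_of_ne (hmem.2.trans ht.2) hu⟩]
  rfl

lemma exists_lipschitzWith (hx : IsDEPCASolution A B f x) {Cx Cf : ℝ}
    (hxC : ∀ t, ‖x t‖ ≤ Cx) (hfC : ∀ t, ‖f t‖ ≤ Cf) : ∃ K, LipschitzWith K x := by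
  refine ⟨_, lipschitzWith_of_eq_add_integral hx.2 (L := ‖rmulVecCLM A‖ * Cx +
    ‖rmulVecCLM B‖ * Cx + Cf) fun u => ?_⟩
  simp only [← rmulVecCLM_apply]
  refine norm_add₃_le.trans ?_
  gcongr
  · exact (ContinuousLinearMap.le_opNorm _ _).trans (by gcongr; exact hxC _)
  · exact (ContinuousLinearMap.le_opNorm _ _).trans (by gcongr; exact hxC _)
  · exact hfC u

end IsDEPCASolution

end DEPCA

lemma exists_subseq_isShiftLimit {X Y : Type*} [TopologicalSpace X] [TopologicalSpace Y]
    {f : ℝ → X} {z : ℤ → Y}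
    (hf : ∀ s : ℕ → ℤ, ∃ φ g, StrictMono φ ∧ IsShiftLimit f g (fun n => (s (φ n) : ℝ)))
    (hz : ∀ s : ℕ → ℤ, ∃ φ ξ, StrictMono φ ∧ IsShiftLimit z ξ (fun n => s (φ n))) (s : ℕ → ℝ) :
    ∃ φ r g ξ, StrictMono φ ∧ Tendsto (fun n => Int.fract (s (φ n))) atTop (𝓝 r) ∧
      IsShiftLimit f g (fun n => (⌊s (φ n)⌋ : ℝ)) ∧ IsShiftLimit z ξ (fun n => ⌊s (φ n)⌋) := by
  obtain ⟨φ₁, g, hφ₁, hg⟩ := hf fun n => ⌊s n⌋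
  obtain ⟨φ₂, ξ, hφ₂, hξ⟩ := hz fun n => ⌊s (φ₁ n)⌋
  obtain ⟨r, -, φ₃, hφ₃, hr⟩ := isCompact_Icc.tendsto_subseq
    (x := fun n => Int.fract (s (φ₁ (φ₂ n))))
    fun n => ⟨Int.fract_nonneg _, (Int.fract_lt_one _).le⟩
  exact ⟨φ₁ ∘ φ₂ ∘ φ₃, r, g, ξ, hφ₁.comp (hφ₂.comp hφ₃), hr,
    hg.comp_strictMono (hφ₂.comp hφ₃), hξ.comp_strictMono hφ₃⟩

theorem reduction_method_aa_general {p : ℕ}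
    (A B : Matrix (Fin p) (Fin p) ℝ)
    (f : ℝ → Fin p → ℂ) (hf : ZAlmostAutomorphic p f)
    (x : ℝ → Fin p → ℂ) (hxb : ∃ C : ℝ, ∀ t : ℝ, ‖x t‖ ≤ C)
    (hx : IsDEPCASolution A B f x) :
    AlmostAutomorphic p x ↔ DiscreteAA p (fun n : ℤ => x (n : ℝ)) := by
  constructor
  · rintro ⟨-, -, hx_aa⟩ s
    obtain ⟨φ, g, hφ, hg⟩ := hx_aa fun n => (s n : ℝ)
    exact ⟨φ, fun k => g k, hφ, fun k => by simpa using hg.1 k, fun k => by simpa using hg.2 k⟩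
  · intro hxD
    obtain ⟨Cx, hxC⟩ := hxb
    obtain ⟨⟨Cf, hfC⟩, -⟩ := hf.1
    obtain ⟨K, hxK⟩ := hx.exists_lipschitzWith hxC hfC
    refine ⟨⟨Cx, hxC⟩, hx.1, fun s => ?_⟩
    obtain ⟨φ, r, g, ξ, hφ, hr, hfg, hxξ⟩ :=
      exists_subseq_isShiftLimit (z := fun n : ℤ => x n) hf.2 hxD s
    obtain ⟨y, hyK, hxy⟩ := exists_isShiftLimit_of_isStepSolution hx.isStepSolution hxK hxC
      hf.1.aestronglyMeasurable hfC hfg hxξ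
    have h := hxy.add_of_lipschitzWith hxK hyK hr
    simp only [Int.floor_add_fract] at h
    exact ⟨φ, _, hφ, h⟩

/-- Reduction method: suppose `A` and `B` are simultaneously triangularizable by an
invertible matrix `T`, with the diagonal entries (eigenvalues) `αᵢ = (T⁻¹AT)ᵢᵢ`,
`βᵢ = (T⁻¹BT)ᵢᵢ` satisfying, for every `u ∈ [0,1]`:
`(βᵢ/αᵢ)(1 - e^{-uαᵢ}) ≠ -1` if `αᵢ ≠ 0`, and `βᵢ u ≠ -1` if `αᵢ = 0`.
Then a bounded solution `x` of the DEPCA `x'(t) = A x(t) + B x(⌊t⌋) + f(t)`, with `f`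
`ℤ`-almost automorphic, is almost automorphic if and only if its restriction to `ℤ`
is discrete almost automorphic. -/
theorem reduction_method_aa {p : ℕ}
    (A B T : Matrix (Fin p) (Fin p) ℝ) (hT : IsUnit T)
    (hAtri : (T⁻¹ * A * T).BlockTriangular id)
    (hBtri : (T⁻¹ * B * T).BlockTriangular id)
    (heig : ∀ i : Fin p, ∀ u ∈ Set.Icc (0:ℝ) 1,
      (((T⁻¹ * A * T) i i ≠ 0 →
        ((T⁻¹ * B * T) i i / (T⁻¹ * A * T) i i) *
          (1 - Real.exp (-(u * (T⁻¹ * A * T) i i))) ≠ -1) ∧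
       ((T⁻¹ * A * T) i i = 0 → (T⁻¹ * B * T) i i * u ≠ -1)))
    (f : ℝ → Fin p → ℂ) (hf : ZAlmostAutomorphic p f)
    (x : ℝ → Fin p → ℂ) (hxb : ∃ C : ℝ, ∀ t : ℝ, ‖x t‖ ≤ C)
    (hx : IsDEPCASolution A B f x) :
    AlmostAutomorphic p x ↔ DiscreteAA p (fun n : ℤ => x (n : ℝ)) :=
  reduction_method_aa_general A B f hf x hxb hx
end

section
/- Let A, B ∈ M_{p×p}(ℝ) be simultaneously triangularizable with diagonal entries α₁,…,α_p and β₁,…,β_p of the triangularized matrices satisfying, for each i and every u ∈ [0,1]: if α_i ≠ 0 then (β_i/α_i)(1 − e^{−u α_i}) ≠ −1, and if α_i = 0 then β_i u ≠ −1. Let ω = p₀/q₀ ∈ ℚ with p₀, q₀ ∈ ℤ relatively prime, q₀ ≥ 1, and let f : ℝ → ℂ^p be Z-ω-periodic. Let x be a bounded solution of the DEPCA x'(t) = A x(t) + B x(⌊t⌋) + f(t), i.e. a bounded continuous function satisfying x(t) = x(s) + ∫_s^t (A x(u) + B x(⌊u⌋) + f(u)) du for all s ≤ t. Then x is q₀ω-periodic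 (i.e. x(t + p₀) = x(t) for all t ∈ ℝ) if and only if the sequence n ↦ x(n) is q₀ω-periodic (i.e. x(n + p₀) = x(n) for all n ∈ ℤ). In particular, if ω = p₀ ∈ ℤ, then x is ω-periodic if and only if n ↦ x(n) is ω-periodic. -/
/-!
Put `z t = x (t + p₀) - x t`. Since `p₀ = q₀ ω` is an integer, `f` is `p₀`-periodic and
`⌊t + p₀⌋ = ⌊t⌋ + p₀`; if moreover `x (n + p₀) = x n` on the integers, then the
delayed terms `B x(⌊t + p₀⌋)` and `B x(⌊t⌋)` cancel and `z` solves the linear ODE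
`z' = A z`.
As `z 0 = 0`, uniqueness of solutions forces `z = 0`.
-/

open MeasureTheory Filter Topology

open Set Function intervalIntegral

noncomputable def rMulVecCLM {p : ℕ} (A : Matrix (Fin p) (Fin p) ℝ) :
    (Fin p → ℂ) →L[ℂ] (Fin p → ℂ) :=
  LinearMap.toContinuousLinearMap (Matrix.toLin' (A.map (↑)))

@[simp]
lemma rMulVecCLM_apply {p : ℕ} (A : Matrix (Fin p) (Fin p) ℝ) (x : Fin p → ℂ) :
    rMulVecCLM A x = RMulVec A x :=
  rfl

lemma rMulVec_sub {p : ℕ} (A : Matrix (Fin p) (Fin p) ℝ) (x y : Fin p → ℂ) :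
    RMulVec A (x - y) = RMulVec A x - RMulVec A y := by
  simp only [← rMulVecCLM_apply, map_sub]

lemma Continuous.rMulVec {p : ℕ} {x : ℝ → Fin p → ℂ} (hx : Continuous x)
    (A : Matrix (Fin p) (Fin p) ℝ) : Continuous fun t => RMulVec A (x t) :=
  (rMulVecCLM A).continuous.comp hx

lemma ContinuousOn.aestronglyMeasurable_of_countable_compl {α E : Type*} [TopologicalSpace α]
    [MeasurableSpace α] [OpensMeasurableSpace α] [MeasurableSingletonClass α]
    [TopologicalSpace E] [TopologicalSpace.PseudoMetrizableSpace E]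
    [SecondCountableTopologyEither α E]
    {μ : Measure α} [NullSingletonClass μ] {f : α → E} {s : Set α} (hf : ContinuousOn f s)
    (hs : sᶜ.Countable) : AEStronglyMeasurable f μ := by
  have hae : ∀ᵐ t ∂μ, t ∈ s := compl_compl s ▸ compl_mem_ae_iff.2 (hs.measure_zero μ)
  simpa only [Measure.restrict_eq_self_of_ae_mem hae] using
    hf.aestronglyMeasurable (μ := μ) (compl_compl s ▸ hs.measurableSet.compl)

lemma BddPC.intervalIntegrable {p : ℕ} {f : ℝ → Fin p → ℂ} (hf : BddPC p f) (a b : ℝ) :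
    IntervalIntegrable f volume a b := by
  obtain ⟨⟨C, hC⟩, hcont, -⟩ := hf
  have hcompl : {t : ℝ | ∀ n : ℤ, t ≠ n}ᶜ = range ((↑) : ℤ → ℝ) := by
    ext t; simp [eq_comm]
  have hm : AEStronglyMeasurable f volume :=
    hcont.aestronglyMeasurable_of_countable_compl (hcompl ▸ countable_range _)
  exact intervalIntegrable_iff.2 <|
    Measure.integrableOn_of_bounded measure_Ioc_lt_top.ne hm (ae_of_all _ hC)

lemma Continuous.intervalIntegrable_comp_floor {E : Type*} [NormedAddCommGroup E]
    {g : ℝ → E} (hg : Continuous g) (a b : ℝ) :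
    IntervalIntegrable (fun u => g ⌊u⌋) volume a b := by
  obtain ⟨C, hC⟩ :=
    (isCompact_Icc (a := (⌊min a b⌋ : ℝ)) (b := max a b)).exists_bound_of_continuousOn
      hg.continuousOn
  have hm : AEStronglyMeasurable (fun u : ℝ => g ⌊u⌋) volume :=
    (hg.stronglyMeasurable.comp_measurable
      (measurable_from_top.comp Int.measurable_floor)).aestronglyMeasurable
  refine intervalIntegrable_iff.2 <| Measure.integrableOn_of_bounded measure_Ioc_lt_top.ne hm
    (ae_restrict_of_forall_mem measurableSet_Ioc fun u hu => hC _ ⟨?_, ?_⟩)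
  · exact_mod_cast Int.floor_le_floor hu.1.le
  · exact (Int.floor_le u).trans hu.2

lemma eq_add_integral_of_forall_le {E : Type*} [NormedAddCommGroup E] [NormedSpace ℝ E]
    {z g : ℝ → E} (h : ∀ s t, s ≤ t → z t = z s + ∫ u in s..t, g u) (s t : ℝ) :
    z t = z s + ∫ u in s..t, g u := by
  rcases le_total s t with hst | hts
  · exact h s t hst
  · rw [h t s hts, integral_symm]
    abel

lemma hasDerivAt_of_forall_le_eq_add_integral {E : Type*} [NormedAddCommGroup E]
    [NormedSpace ℝ E] [CompleteSpace E] {z g : ℝ → E} (hg : Continuous g)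
    (h : ∀ s t, s ≤ t → z t = z s + ∫ u in s..t, g u) (t : ℝ) : HasDerivAt z (g t) t := by
  have hz : z = fun t => z 0 + ∫ u in (0 : ℝ)..t, g u :=
    funext (eq_add_integral_of_forall_le h 0)
  rw [hz]
  exact (hg.integral_hasStrictDerivAt 0 t).hasDerivAt.const_add _

lemma eq_zero_of_hasDerivAt_clm_of_eq_zero {E : Type*} [NormedAddCommGroup E] [NormedSpace ℝ E]
    (L : E →L[ℝ] E) {z : ℝ → E} (hz : ∀ t, HasDerivAt z (L (z t)) t) (h0 : z 0 = 0) :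
    z = 0 :=
  ODE_solution_unique_univ (v := fun _ => L) (s := fun _ => univ)
    (fun _ => L.lipschitz.lipschitzOnWith) (fun t => ⟨hz t, trivial⟩)
    (fun t => ⟨by simp, trivial⟩) h0

namespace IsDEPCASolution

variable {p : ℕ} {A B : Matrix (Fin p) (Fin p) ℝ} {f x : ℝ → Fin p → ℂ}

lemma intervalIntegrable (hx : IsDEPCASolution A B f x)
    (hf : ∀ a b, IntervalIntegrable f volume a b) (a b : ℝ) :
    IntervalIntegrable (fun u => RMulVec A (x u) + RMulVec B (x ⌊u⌋) + f u) volume a b :=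
  (((hx.1.rMulVec A).intervalIntegrable a b).add
    ((hx.1.rMulVec B).intervalIntegrable_comp_floor a b)).add (hf a b)

lemma sub_shift_eq_add_integral (hx : IsDEPCASolution A B f x)
    (hf : ∀ a b, IntervalIntegrable f volume a b) {P : ℤ} (hfP : Periodic f P)
    (hxP : ∀ n : ℤ, x (n + P) = x n) {s t : ℝ} (hst : s ≤ t) :
    x (t + P) - x t = x (s + P) - x s + ∫ u in s..t, RMulVec A (x (u + P) - x u) := by
  set F : ℝ → Fin p → ℂ := fun u => RMulVec A (x u) + RMulVec B (x ⌊u⌋) + f u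
  have hF_shift : ∀ u, F (u + P) = F u + RMulVec A (x (u + P) - x u) := by
    intro u
    have hfloor : ((⌊u + P⌋ : ℤ) : ℝ) = ⌊u⌋ + P := by
      rw [Int.floor_add_intCast]; push_cast; ring
    simp only [F, hfloor, hxP, hfP u, rMulVec_sub]
    abel
  have hF_int : ∫ u in s + P..t + P, F u =
      (∫ u in s..t, F u) + ∫ u in s..t, RMulVec A (x (u + P) - x u) := by
    rw [← integral_comp_add_right, integral_congr fun u _ => hF_shift u]
    have hshift : Continuous fun u => x (u + P) - x u :=
      (hx.1.comp (continuous_add_const _)).sub hx.1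
    exact integral_add (hx.intervalIntegrable hf s t) ((hshift.rMulVec A).intervalIntegrable s t)
  rw [hx.2 (s + P) (t + P) (by linarith), hF_int, hx.2 s t hst]
  abel

end IsDEPCASolution

theorem depca_periodic_iff_discrete_periodic_general {p : ℕ}
    (A B : Matrix (Fin p) (Fin p) ℝ)
    (p₀ q₀ : ℤ) (hq₀ : 1 ≤ q₀)
    (ω : ℝ) (hω : ω = (p₀ : ℝ) / (q₀ : ℝ))
    (f : ℝ → Fin p → ℂ) (hfpc : BddPC p f) (hfper : ∀ t : ℝ, f (t + ω) = f t)
    (x : ℝ → Fin p → ℂ)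
    (hx : IsDEPCASolution A B f x) :
    (∀ t : ℝ, x (t + (p₀ : ℝ)) = x t) ↔
      (∀ n : ℤ, x ((n : ℝ) + (p₀ : ℝ)) = x (n : ℝ)) := by
  refine ⟨fun h n => h n, fun hd => ?_⟩
  have hfP : Periodic f p₀ := by
    have hq : (q₀ : ℝ) ≠ 0 := by exact_mod_cast (by omega : q₀ ≠ 0)
    simpa [hω, mul_div_cancel₀ _ hq] using Periodic.int_mul hfper q₀
  set z : ℝ → Fin p → ℂ := fun t => x (t + p₀) - x t
  have hzc : Continuous z := (hx.1.comp (continuous_add_const _)).sub hx.1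
  have hz_deriv : ∀ t, HasDerivAt z (rMulVecCLM A (z t)) t :=
    hasDerivAt_of_forall_le_eq_add_integral (hzc.rMulVec A)
      fun _ _ hst => hx.sub_shift_eq_add_integral hfpc.intervalIntegrable hfP hd hst
  have hz0 : z 0 = 0 := by simpa [z, sub_eq_zero] using hd 0
  have hz_zero :=
    eq_zero_of_hasDerivAt_clm_of_eq_zero ((rMulVecCLM A).restrictScalars ℝ) hz_deriv hz0
  exact fun t => sub_eq_zero.1 (congrFun hz_zero t)

/-- Periodic case of the reduction method: under the simultaneous triangularization
and eigenvalue conditions on `A, B`, if `ω = p₀/q₀ ∈ ℚ` (with `p₀, q₀` coprime,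
`q₀ ≥ 1`) and `f` is `ℤ`-`ω`-periodic (bounded, piecewise continuous and
`ω`-periodic), then a bounded solution `x` of the DEPCA
`x'(t) = A x(t) + B x(⌊t⌋) + f(t)` is `q₀ω`-periodic (i.e. `p₀`-periodic) if and
only if the sequence `n ↦ x(n)` is `q₀ω`-periodic. -/
theorem depca_periodic_iff_discrete_periodic {p : ℕ}
    (A B T : Matrix (Fin p) (Fin p) ℝ) (hT : IsUnit T)
    (hAtri : (T⁻¹ * A * T).BlockTriangular id)
    (hBtri : (T⁻¹ * B * T).BlockTriangular id)
    (heig : ∀ i : Fin p, ∀ u ∈ Set.Icc (0:ℝ) 1,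
      (((T⁻¹ * A * T) i i ≠ 0 →
        ((T⁻¹ * B * T) i i / (T⁻¹ * A * T) i i) *
          (1 - Real.exp (-(u * (T⁻¹ * A * T) i i))) ≠ -1) ∧
       ((T⁻¹ * A * T) i i = 0 → (T⁻¹ * B * T) i i * u ≠ -1)))
    (p₀ q₀ : ℤ) (hq₀ : 1 ≤ q₀) (hcop : Int.gcd p₀ q₀ = 1)
    (ω : ℝ) (hω : ω = (p₀ : ℝ) / (q₀ : ℝ))
    (f : ℝ → Fin p → ℂ) (hfpc : BddPC p f) (hfper : ∀ t : ℝ, f (t + ω) = f t)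
    (x : ℝ → Fin p → ℂ) (hxb : ∃ C : ℝ, ∀ t : ℝ, ‖x t‖ ≤ C)
    (hx : IsDEPCASolution A B f x) :
    (∀ t : ℝ, x (t + (p₀ : ℝ)) = x t) ↔
      (∀ n : ℤ, x ((n : ℝ) + (p₀ : ℝ)) = x (n : ℝ)) :=
  depca_periodic_iff_discrete_periodic_general A B p₀ q₀ hq₀ ω hω f hfpc hfper x hx
end
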